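/- arXiv:1307.1600 — 4 statements merged into one kernel-verified Lean document; each statement's English description precedes it below -/
import Mathlib

section
/- For nonnegative measurable functions g_1,…,g_{d+1} on ℝ × ℝ^d and distinct times t_1,…,t_{d+1} ∈ ℝ, for any fixed pair of indices 1 ≤ i < j ≤ d+1 one has ∫_{ℝ^d}∫_{ℝ^d} ∏_{k=1}^{d+1} g_k(t_k, x + t_k v) dx dv ≤ |t_i − t_j|^{−d} ‖g_i(t_i,·)‖_{L^1(ℝ^d)} ‖g_j(t_j,·)‖_{L^1(ℝ^d)} ∏_{k ≠ i,j} ‖g_k(t_k,·)‖_{L^∞(ℝ^d)}. -/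
/-!
Translating `x` by `-t_i v` turns the `i`-th and `j`-th factors into `g_i(x) g_j(x + (t_j - t_i) v)`;
after Tonelli, the `v`-integral is a dilation by `t_j - t_i`, which costs `|t_i - t_j|^{-d}`.
The remaining factors are bounded by their essential suprema, which holds for almost every `x`
because translations preserve Lebesgue measure.
-/

open MeasureTheory ENNReal Finset

section

variable {G : Type*} [AddGroup G] [MeasurableSpace G] [MeasurableAdd G] (μ : Measure G)
  [μ.IsAddRightInvariant]

theorem ae_prod_comp_add_le_mul_prod_essSup {ι : Type*} [Fintype ι] [DecidableEq ι]
    (F : ι → G → ℝ≥0∞) (s : ι → G) {i j : ι} (hij : i ≠ j) :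
    ∀ᵐ x ∂μ, ∏ k, F k (x + s k) ≤
      F i (x + s i) * F j (x + s j) * ∏ k ∈ univ \ {i, j}, essSup (F k) μ := by
  have hbound : ∀ᵐ x ∂μ, ∀ k, F k (x + s k) ≤ essSup (F k) μ := ae_all_iff.2 fun k =>
    (measurePreserving_add_right μ (s k)).quasiMeasurePreserving.ae (ae_le_essSup (F k))
  filter_upwards [hbound] with x hx
  rw [← prod_sdiff (subset_univ {i, j}), prod_pair hij, mul_comm]
  gcongr with k
  exact hx k

end

section

variable {E : Type*} [NormedAddCommGroup E] [NormedSpace ℝ E] [MeasurableSpace E] [BorelSpace E]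
  [FiniteDimensional ℝ E] (μ : Measure E) [μ.IsAddHaarMeasure]

theorem lintegral_comp_smul (f : E → ℝ≥0∞) {r : ℝ} (hr : r ≠ 0) :
    ∫⁻ v, f (r • v) ∂μ = (ENNReal.ofReal |r| ^ Module.finrank ℝ E)⁻¹ * ∫⁻ y, f y ∂μ := by
  calc ∫⁻ v, f (r • v) ∂μ = ∫⁻ y, f y ∂(μ.map (r • ·)) :=
        (lintegral_map_equiv f (MeasurableEquiv.smul₀ r hr)).symm
    _ = _ := by
      rw [Measure.map_addHaar_smul μ hr, lintegral_smul_measure, abs_inv, abs_pow,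
        ofReal_inv_of_pos (by positivity), ofReal_pow (abs_nonneg r), smul_eq_mul]

theorem lintegral_lintegral_mul_comp_add_smul (f h : E → ℝ≥0∞) (hf : Measurable f)
    (hh : Measurable h) {a b : ℝ} (hab : a ≠ b) :
    ∫⁻ v, ∫⁻ x, f (x + a • v) * h (x + b • v) ∂μ ∂μ =
      (ENNReal.ofReal |a - b| ^ Module.finrank ℝ E)⁻¹ * (∫⁻ x, f x ∂μ) * ∫⁻ y, h y ∂μ := by
  have hshift (v : E) : ∫⁻ x, f (x + a • v) * h (x + b • v) ∂μ =
      ∫⁻ x, f x * h (x + (b - a) • v) ∂μ := by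
    rw [← lintegral_add_right_eq_self (fun x => f x * h (x + (b - a) • v)) (a • v)]
    simp only [add_assoc, ← add_smul, add_sub_cancel]
  have hscale (x : E) : ∫⁻ v, h (x + (b - a) • v) ∂μ =
      (ENNReal.ofReal |a - b| ^ Module.finrank ℝ E)⁻¹ * ∫⁻ y, h y ∂μ := by
    rw [lintegral_comp_smul μ (fun w => h (x + w)) (sub_ne_zero.2 hab.symm), abs_sub_comm,
      lintegral_add_left_eq_self]
  have hinner (x : E) : ∫⁻ v, f x * h (x + (b - a) • v) ∂μ =
      f x * ((ENNReal.ofReal |a - b| ^ Module.finrank ℝ E)⁻¹ * ∫⁻ y, h y ∂μ) := by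
    rw [lintegral_const_mul _ (by fun_prop), hscale]
  simp_rw [hshift]
  rw [lintegral_lintegral_swap (by fun_prop)]
  simp_rw [hinner]
  rw [lintegral_mul_const _ hf]
  ring

theorem lintegral_lintegral_prod_comp_add_smul_le {ι : Type*} [Fintype ι] [DecidableEq ι]
    (F : ι → E → ℝ≥0∞) (t : ι → ℝ) {i j : ι} (hij : i ≠ j) (ht : t i ≠ t j)
    (hi : Measurable (F i)) (hj : Measurable (F j)) :
    ∫⁻ v, ∫⁻ x, ∏ k, F k (x + t k • v) ∂μ ∂μ ≤
      (ENNReal.ofReal |t i - t j| ^ Module.finrank ℝ E)⁻¹ * (∫⁻ x, F i x ∂μ) * (∫⁻ x, F j x ∂μ)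
        * ∏ k ∈ univ \ {i, j}, essSup (F k) μ := by
  set C := ∏ k ∈ univ \ {i, j}, essSup (F k) μ
  calc ∫⁻ v, ∫⁻ x, ∏ k, F k (x + t k • v) ∂μ ∂μ
      ≤ ∫⁻ v, ∫⁻ x, F i (x + t i • v) * F j (x + t j • v) * C ∂μ ∂μ :=
        lintegral_mono fun v =>
          lintegral_mono_ae (ae_prod_comp_add_le_mul_prod_essSup μ F (t · • v) hij)
    _ = (∫⁻ v, ∫⁻ x, F i (x + t i • v) * F j (x + t j • v) ∂μ ∂μ) * C := by
      have hprod : Measurable fun p : E × E => F i (p.2 + t i • p.1) * F j (p.2 + t j • p.1) := by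
        fun_prop
      rw [← lintegral_mul_const _ hprod.lintegral_prod_right']
      exact lintegral_congr fun v => lintegral_mul_const _ (hprod.comp measurable_prodMk_left)
    _ = _ := by rw [lintegral_lintegral_mul_comp_add_smul μ _ _ hi hj ht]

end

theorem kinetic_multilinear_L1_Linfty_bound_general (d : ℕ)
    (g : Fin (d + 1) → ℝ → (Fin d → ℝ) → ℝ)
    (hg_meas : ∀ k, Measurable (Function.uncurry (g k)))
    (t : Fin (d + 1) → ℝ) (ht : Function.Injective t)
    (i j : Fin (d + 1)) (hij : i < j) :
    (∫⁻ v : Fin d → ℝ, ∫⁻ x : Fin d → ℝ,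
        ∏ k : Fin (d + 1), ENNReal.ofReal (g k (t k) (x + t k • v)))
      ≤ (ENNReal.ofReal |t i - t j| ^ d)⁻¹
          * eLpNorm (g i (t i)) 1 volume * eLpNorm (g j (t j)) 1 volume
          * ∏ k ∈ univ \ {i, j}, eLpNorm (g k (t k)) ∞ volume := by
  have hmeas (k : Fin (d + 1)) : Measurable fun y => ‖g k (t k) y‖ₑ :=
    ((hg_meas k).comp measurable_prodMk_left).enorm
  calc (∫⁻ v : Fin d → ℝ, ∫⁻ x : Fin d → ℝ,
        ∏ k : Fin (d + 1), ENNReal.ofReal (g k (t k) (x + t k • v)))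
      ≤ ∫⁻ v : Fin d → ℝ, ∫⁻ x : Fin d → ℝ, ∏ k : Fin (d + 1), ‖g k (t k) (x + t k • v)‖ₑ := by
        gcongr with v x k
        exact Real.ofReal_le_enorm _
    _ ≤ _ := lintegral_lintegral_prod_comp_add_smul_le volume (fun k y => ‖g k (t k) y‖ₑ) t
        hij.ne (ht.ne hij.ne) (hmeas i) (hmeas j)
    _ = _ := by
      rw [Module.finrank_fin_fun, eLpNorm_one_eq_lintegral_enorm, eLpNorm_one_eq_lintegral_enorm]
      simp only [eLpNorm_exponent_top]
      rfl

/-- for nonnegative measurable `g_1, …, g_{d+1}` on `ℝ × ℝ^d` and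
distinct times `t_1, …, t_{d+1}`, for any fixed pair `i < j`,
`∫∫ ∏_k g_k(t_k, x + t_k v) dx dv
  ≤ |t_i − t_j|^{−d} ‖g_i(t_i,·)‖_{L^1} ‖g_j(t_j,·)‖_{L^1} ∏_{k ≠ i,j} ‖g_k(t_k,·)‖_{L^∞}`. -/
theorem kinetic_multilinear_L1_Linfty_bound (d : ℕ)
    (g : Fin (d + 1) → ℝ → (Fin d → ℝ) → ℝ)
    (hg_meas : ∀ k, Measurable (Function.uncurry (g k)))
    (hg_nonneg : ∀ k t x, 0 ≤ g k t x)
    (t : Fin (d + 1) → ℝ) (ht : Function.Injective t)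
    (i j : Fin (d + 1)) (hij : i < j) :
    (∫⁻ v : Fin d → ℝ, ∫⁻ x : Fin d → ℝ,
        ∏ k : Fin (d + 1), ENNReal.ofReal (g k (t k) (x + t k • v)))
      ≤ (ENNReal.ofReal |t i - t j| ^ d)⁻¹
          * eLpNorm (g i (t i)) 1 volume * eLpNorm (g j (t j)) 1 volume
          * ∏ k ∈ univ \ {i, j}, eLpNorm (g k (t k)) ∞ volume :=
  kinetic_multilinear_L1_Linfty_bound_general d g hg_meas t ht i j hij
end

section
/- There is no finite constant C such that the adjoint estimate ‖ρ*g‖_{L^{d+1}(ℝ^d × ℝ^d)} ≤ C ‖g‖_{L^{d+1}_t L^{(d+1)/2}_x} holds for all g ∈ 𝒮(ℝ × ℝ^d), where ρ*g(x,v) = ∫_ℝ g(t, x + tv) dt. -/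
/-!
Take for `g` a bump function on `ℝ × ℝ^d`: the right-hand side is finite, but `ρ*g` is not in
`L^{d+1}`. If `x` has size `R`, then for `v` in a set of measure `≈ R` (a neighbourhood of the
segment `{-x/s : 1 ≤ s ≤ 3/2}`) the line `t ↦ x + t v` crosses the unit ball during a time
`≈ 1/R`, so `ρ*g(x, v) ≳ 1/R` and `∫ |ρ*g(x, ·)|^{d+1} ≳ R^{-d}`. Each dyadic block
`x 0 ∈ [2^m, 2^{m+1})`, `|x j| ≤ 2^m`, has volume `≈ 2^{md}` and so contributes a fixed amount:
the left-hand side diverges logarithmically.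
-/

open MeasureTheory ENNReal Metric Set

section ShearedProduct

variable {α β : Type*} [MeasurableSpace α] [MeasurableSpace β] [AddGroup β] [MeasurableSub₂ β]
  {f : α → β} {I : Set α} {S : Set β}

theorem measurableSet_setOf_sub_mem (hf : Measurable f) (hI : MeasurableSet I)
    (hS : MeasurableSet S) : MeasurableSet {p : α × β | p.1 ∈ I ∧ p.2 - f p.1 ∈ S} :=
  (measurable_fst hI).inter ((measurable_snd.sub (hf.comp measurable_fst)) hS)

theorem measure_prod_setOf_sub_mem [MeasurableAdd β] (μ : Measure α) (ν : Measure β) [SFinite ν]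
    [ν.IsAddRightInvariant] (hf : Measurable f) (hI : MeasurableSet I) (hS : MeasurableSet S) :
    μ.prod ν {p | p.1 ∈ I ∧ p.2 - f p.1 ∈ S} = μ I * ν S := by
  have hslice : ∀ a, ν (Prod.mk a ⁻¹' {p : α × β | p.1 ∈ I ∧ p.2 - f p.1 ∈ S}) =
      I.indicator (fun _ => ν S) a := by
    intro a
    by_cases ha : a ∈ I
    · simpa [ha, Set.preimage, sub_eq_add_neg] using measure_preimage_add_right ν (-f a) S
    · simp [ha]
  rw [Measure.prod_apply (measurableSet_setOf_sub_mem hf hI hS), lintegral_congr hslice,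
    lintegral_indicator_const hI, mul_comm]

end ShearedProduct

theorem lintegral_rpow_lintegral_rpow_ne_top {α β : Type*} [MeasurableSpace α]
    [MeasurableSpace β] {μ : Measure α} {ν : Measure β} {f : α × β → ℝ} {s : Set α} {u : Set β}
    (hs : μ s ≠ ∞) (hu : ν u ≠ ∞) (hf : ∀ z, |f z| ≤ 1) (hsupp : Function.support f ⊆ s ×ˢ u)
    {p r : ℝ} (hp : 0 < p) (hr : 0 < r) :
    ∫⁻ t, (∫⁻ x, ENNReal.ofReal |f (t, x)| ^ p ∂ν) ^ r ∂μ ≠ ∞ := by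
  have hzero : ∀ t x, ¬ (t ∈ s ∧ x ∈ u) → ENNReal.ofReal |f (t, x)| ^ p = 0 := fun t x h => by
    rw [Function.notMem_support.1 fun hz => h (hsupp hz)]
    simp [hp]
  have hinner : ∀ t, (∫⁻ x, ENNReal.ofReal |f (t, x)| ^ p ∂ν) ^ r ≤
      s.indicator (fun _ => ν u ^ r) t := by
    intro t
    by_cases ht : t ∈ s
    · rw [indicator_of_mem ht]
      gcongr
      calc ∫⁻ x, ENNReal.ofReal |f (t, x)| ^ p ∂ν ≤ ∫⁻ x, u.indicator (fun _ => 1) x ∂ν := by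
            refine lintegral_mono fun x => ?_
            by_cases hx : x ∈ u
            · rw [indicator_of_mem hx]
              exact rpow_le_one (ofReal_le_one.2 (hf _)) hp.le
            · rw [hzero t x (fun h => hx h.2)]; exact zero_le
        _ ≤ 1 * ν u := lintegral_indicator_const_le u 1
        _ = ν u := one_mul _
    · rw [indicator_of_notMem ht, lintegral_congr fun x => hzero t x fun h => ht h.1]
      simp [hr]
  refine ne_top_of_le_ne_top ?_ ((lintegral_mono hinner).trans (lintegral_indicator_const_le s _))
  exact mul_ne_top (rpow_ne_top_of_nonneg hr.le hu) hs

theorem pi_norm_le_iff_head_tail {E : Type*} [SeminormedAddCommGroup E] {n : ℕ}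
    {x : Fin (n + 1) → E} {r : ℝ} (hr : 0 ≤ r) : ‖x‖ ≤ r ↔ ‖x 0‖ ≤ r ∧ ‖Fin.tail x‖ ≤ r := by
  simp only [pi_norm_le_iff_of_nonneg hr, Fin.forall_fin_succ, Fin.tail]

section DensityAdjoint

variable {E : Type*} [NormedAddCommGroup E] [NormedSpace ℝ E]

/-- `ρ* g`, the adjoint of the density map `ρ` of the free transport equation. -/
noncomputable def densityAdjoint (g : ℝ × E → ℝ) (x v : E) : ℝ :=
  ∫ t, g (t, x + t • v)

variable [HasContDiffBump (ℝ × E)]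

theorem ContDiffBump.integrable_comp_line (φ : ContDiffBump (0 : ℝ × E)) (x v : E) :
    Integrable fun t : ℝ => φ (t, x + t • v) := by
  refine (φ.continuous.comp (by fun_prop)).integrable_of_hasCompactSupport <|
    HasCompactSupport.intro (isCompact_closedBall (0 : ℝ) φ.rOut) fun t ht => φ.zero_of_le_dist ?_
  rw [mem_closedBall, dist_zero_right, not_le] at ht
  rw [dist_zero_right, Prod.norm_def]
  exact ht.le.trans (le_max_left _ _)

theorem ContDiffBump.le_densityAdjoint (φ : ContDiffBump (0 : ℝ × E)) {x v : E} {s δ : ℝ}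
    (hδ : 0 ≤ δ) (hs : |s| + δ ≤ φ.rIn) (hxv : ‖x + s • v‖ + δ * ‖v‖ ≤ φ.rIn) :
    δ ≤ densityAdjoint φ x v := by
  have hone : ∀ t ∈ Icc s (s + δ), 1 ≤ φ (t, x + t • v) := by
    rintro t ⟨hst, hts⟩
    refine (φ.one_of_mem_closedBall ?_).ge
    rw [mem_closedBall, dist_zero_right, Prod.norm_def]
    have hδt : |t - s| ≤ δ := abs_le.2 ⟨by linarith, by linarith⟩
    refine max_le ?_ ?_
    · calc ‖t‖ = |s + (t - s)| := by rw [Real.norm_eq_abs, add_sub_cancel]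
        _ ≤ φ.rIn := (abs_add_le _ _).trans (by linarith)
    · calc ‖x + t • v‖ = ‖(x + s • v) + (t - s) • v‖ := by rw [sub_smul]; abel_nf
        _ ≤ ‖x + s • v‖ + |t - s| * ‖v‖ := by
          rw [← Real.norm_eq_abs, ← norm_smul]; exact norm_add_le _ _
        _ ≤ φ.rIn := by nlinarith [norm_nonneg v]
  have hint := φ.integrable_comp_line x v
  calc δ = 1 * volume.real (Icc s (s + δ)) := by simp [hδ]
    _ ≤ ∫ t in Icc s (s + δ), φ (t, x + t • v) :=
      setIntegral_ge_of_const_le_real measurableSet_Icc (by simp) hone hint.integrableOn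
    _ ≤ ∫ t, φ (t, x + t • v) :=
      setIntegral_le_integral hint (.of_forall fun _ => φ.nonneg)

end DensityAdjoint

section TestFunction

variable (E : Type*) [NormedAddCommGroup E] [NormedSpace ℝ E] [FiniteDimensional ℝ E]

noncomputable def testBump : ContDiffBump (0 : ℝ × E) := ⟨2, 3, two_pos, by norm_num⟩

noncomputable def testSchwartz : SchwartzMap (ℝ × E) ℝ :=
  (testBump E).hasCompactSupport.toSchwartzMap (testBump E).contDiff

@[simp]
theorem testSchwartz_apply (p : ℝ × E) : testSchwartz E p = testBump E p := rfl

variable {E}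

theorem inv_two_mul_le_densityAdjoint_testBump {x v : E} {s R : ℝ} (hs₁ : 1 ≤ s)
    (hs₂ : s ≤ 3 / 2) (hR : 1 ≤ R) (hx : ‖x‖ ≤ R) (hxv : ‖x + s • v‖ ≤ 1) :
    (2 * R)⁻¹ ≤ densityAdjoint (testBump E) x v := by
  have hv : ‖v‖ ≤ 2 * R := by
    have : s * ‖v‖ ≤ 1 + R := by
      calc s * ‖v‖ = ‖(x + s • v) - x‖ := by
            rw [add_sub_cancel_left, norm_smul, Real.norm_of_nonneg (by linarith)]
        _ ≤ 1 + R := (norm_sub_le _ _).trans (add_le_add hxv hx)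
    nlinarith [norm_nonneg v]
  have hRinv : (2 * R)⁻¹ ≤ 1 / 2 := by
    rw [inv_le_comm₀ (by positivity) (by norm_num)]; linarith
  have hvR : (2 * R)⁻¹ * ‖v‖ ≤ 1 := by
    rw [inv_mul_le_iff₀ (by positivity)]; linarith
  refine (testBump E).le_densityAdjoint (s := s) (by positivity) ?_ ?_ <;>
    simp only [testBump, abs_of_pos (by linarith : 0 < s)] <;> linarith

theorem lintegral_rpow_lintegral_rpow_testSchwartz_ne_top [MeasurableSpace E] [BorelSpace E]
    (μ : Measure E) [IsFiniteMeasureOnCompacts μ] {p r : ℝ} (hp : 0 < p) (hr : 0 < r) :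
    ∫⁻ t, (∫⁻ x, ENNReal.ofReal |testSchwartz E (t, x)| ^ p ∂μ) ^ r ≠ ∞ := by
  refine lintegral_rpow_lintegral_rpow_ne_top measure_ball_lt_top.ne measure_ball_lt_top.ne
    (fun z => ?_) ?_ hp hr (s := ball 0 3) (u := ball 0 3)
  · rw [testSchwartz_apply, abs_of_nonneg (testBump E).nonneg]
    exact (testBump E).le_one
  · rw [ball_prod_same]
    exact (testBump E).support_eq.le

end TestFunction

section Coordinates

variable {k : ℕ}

local notation "headTail" => MeasurableEquiv.piFinSuccAbove (fun _ : Fin (k + 1) => ℝ) 0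

local notation "φ₀" => testBump (Fin (k + 1) → ℝ)

theorem volume_preimage_headTail {S : Set (ℝ × (Fin k → ℝ))} (hS : MeasurableSet S) :
    volume (headTail ⁻¹' S) = (volume : Measure ℝ).prod volume S :=
  (volume_preserving_piFinSuccAbove (fun _ : Fin (k + 1) => ℝ) 0).measure_preimage
    hS.nullMeasurableSet

/-- Velocities for which the line `t ↦ x + t • v` is near the origin at the time
`s = -x 0 / v 0 ∈ [1, 3/2]`: a box sheared along `Fin.tail x / x 0`. -/
def velocitySet (x : Fin (k + 1) → ℝ) : Set (Fin (k + 1) → ℝ) :=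
  {v | v 0 ∈ Icc (-x 0) (-(2 * x 0 / 3)) ∧
    Fin.tail v - v 0 • (x 0)⁻¹ • Fin.tail x ∈ closedBall 0 (1 / 2)}

theorem velocitySet_eq_preimage (x : Fin (k + 1) → ℝ) :
    velocitySet x = headTail ⁻¹' {p | p.1 ∈ Icc (-x 0) (-(2 * x 0 / 3)) ∧
      p.2 - (fun a : ℝ => a • (x 0)⁻¹ • Fin.tail x) p.1 ∈ closedBall 0 (1 / 2)} := by
  ext v
  simp [velocitySet]

theorem measurableSet_velocitySet (x : Fin (k + 1) → ℝ) : MeasurableSet (velocitySet x) := by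
  rw [velocitySet_eq_preimage]
  exact (MeasurableEquiv.measurable _) (measurableSet_setOf_sub_mem
    (measurable_id.smul_const _) measurableSet_Icc measurableSet_closedBall)

theorem volume_velocitySet (x : Fin (k + 1) → ℝ) :
    volume (velocitySet x) = ENNReal.ofReal (x 0 / 3) := by
  rw [velocitySet_eq_preimage, volume_preimage_headTail, measure_prod_setOf_sub_mem _ _
      (f := fun a : ℝ => a • (x 0)⁻¹ • Fin.tail x) (measurable_id.smul_const _) measurableSet_Icc
      measurableSet_closedBall, Real.volume_Icc, Real.volume_pi_closedBall _ (by norm_num)]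
  · rw [show -(2 * x 0 / 3) - -x 0 = x 0 / 3 by ring]
    norm_num
  · exact measurableSet_setOf_sub_mem (measurable_id.smul_const _) measurableSet_Icc
      measurableSet_closedBall

theorem exists_norm_add_smul_le_one_of_mem_velocitySet {x v : Fin (k + 1) → ℝ} (hx : 0 < x 0)
    (hv : v ∈ velocitySet x) : ∃ s : ℝ, 1 ≤ s ∧ s ≤ 3 / 2 ∧ ‖x + s • v‖ ≤ 1 := by
  obtain ⟨⟨hv₁, hv₂⟩, hvt⟩ := hv
  have hv0 : 0 < -v 0 := by linarith
  have hv0ne : v 0 ≠ 0 := by linarith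
  have hsv : x 0 / -v 0 * v 0 = -x 0 := by field_simp
  have hs : x 0 / -v 0 ≤ 3 / 2 := (div_le_iff₀ hv0).2 (by linarith)
  refine ⟨x 0 / -v 0, (one_le_div₀ hv0).2 (by linarith), hs,
    (pi_norm_le_iff_head_tail zero_le_one).2 ⟨?_, ?_⟩⟩
  · rw [Pi.add_apply, Pi.smul_apply, smul_eq_mul, hsv, add_neg_cancel, norm_zero]
    exact zero_le_one
  · have htail : Fin.tail (x + (x 0 / -v 0) • v) =
        (x 0 / -v 0) • (Fin.tail v - v 0 • (x 0)⁻¹ • Fin.tail x) := by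
      ext j
      simp only [Fin.tail, Pi.add_apply, Pi.smul_apply, smul_eq_mul, Pi.sub_apply]
      field_simp
      ring
    rw [mem_closedBall, dist_zero_right] at hvt
    rw [htail, norm_smul, Real.norm_of_nonneg (by positivity)]
    calc x 0 / -v 0 * _ ≤ 3 / 2 * (1 / 2) := mul_le_mul hs hvt (norm_nonneg _) (by norm_num)
      _ ≤ 1 := by norm_num

theorem lintegral_densityAdjoint_testBump_pow_ge {x : Fin (k + 1) → ℝ} (hx₀ : 1 ≤ x 0)
    (hx : ‖Fin.tail x‖ ≤ x 0) (n : ℕ) :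
    ENNReal.ofReal ((2 * x 0)⁻¹) ^ n * ENNReal.ofReal (x 0 / 3) ≤
      ∫⁻ v, ENNReal.ofReal |densityAdjoint φ₀ x v| ^ n := by
  have hxR : ‖x‖ ≤ x 0 :=
    (pi_norm_le_iff_head_tail (by linarith)).2 ⟨(Real.norm_of_nonneg (by linarith)).le, hx⟩
  calc ENNReal.ofReal ((2 * x 0)⁻¹) ^ n * ENNReal.ofReal (x 0 / 3)
      = ∫⁻ _ in velocitySet x, ENNReal.ofReal ((2 * x 0)⁻¹) ^ n := by
        rw [setLIntegral_const, volume_velocitySet]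
    _ ≤ ∫⁻ v in velocitySet x, ENNReal.ofReal |densityAdjoint φ₀ x v| ^ n := by
        refine setLIntegral_mono' (measurableSet_velocitySet x) fun v hv => ?_
        obtain ⟨s, hs₁, hs₂, hxv⟩ := exists_norm_add_smul_le_one_of_mem_velocitySet (by linarith) hv
        gcongr
        exact (inv_two_mul_le_densityAdjoint_testBump hs₁ hs₂ hx₀ hxR hxv).trans (le_abs_self _)
    _ ≤ ∫⁻ v, ENNReal.ofReal |densityAdjoint φ₀ x v| ^ n := setLIntegral_le_lintegral _ _

def dyadicBlock (k m : ℕ) : Set (Fin (k + 1) → ℝ) :=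
  {x | x 0 ∈ Ico (2 ^ m) (2 ^ (m + 1)) ∧ ‖Fin.tail x‖ ≤ 2 ^ m}

theorem dyadicBlock_eq_preimage (m : ℕ) :
    dyadicBlock k m = headTail ⁻¹' (Ico (2 ^ m) (2 ^ (m + 1)) ×ˢ closedBall 0 (2 ^ m)) := by
  ext x
  simp [dyadicBlock]

theorem measurableSet_dyadicBlock (m : ℕ) : MeasurableSet (dyadicBlock k m) := by
  rw [dyadicBlock_eq_preimage]
  exact (MeasurableEquiv.measurable _) (measurableSet_Ico.prod measurableSet_closedBall)

theorem volume_dyadicBlock (m : ℕ) :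
    volume (dyadicBlock k m) = ENNReal.ofReal (2 ^ m * (2 * 2 ^ m) ^ k) := by
  rw [dyadicBlock_eq_preimage, volume_preimage_headTail (measurableSet_Ico.prod
    measurableSet_closedBall), Measure.prod_prod, Real.volume_Ico,
    Real.volume_pi_closedBall _ (by positivity), ← ENNReal.ofReal_mul (by ring_nf; positivity),
    Fintype.card_fin, pow_succ]
  ring_nf

theorem pairwise_disjoint_dyadicBlock : Pairwise (Function.onFun Disjoint (dyadicBlock k)) := by
  intro m n hmn
  rw [Function.onFun, Set.disjoint_left]
  rintro x ⟨⟨hm₁, hm₂⟩, -⟩ ⟨⟨hn₁, hn₂⟩, -⟩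
  rcases hmn.lt_or_gt with h | h
  · linarith [pow_le_pow_right₀ (one_le_two : (1 : ℝ) ≤ 2) (show m + 1 ≤ n by omega)]
  · linarith [pow_le_pow_right₀ (one_le_two : (1 : ℝ) ≤ 2) (show n + 1 ≤ m by omega)]

theorem ofReal_le_setLIntegral_dyadicBlock (m : ℕ) :
    ENNReal.ofReal (2 ^ k / (3 * 4 ^ (k + 2))) ≤ ∫⁻ x in dyadicBlock k m,
      ∫⁻ v, ENNReal.ofReal |densityAdjoint φ₀ x v| ^ (k + 2) := by
  have hm : (1 : ℝ) ≤ 2 ^ m := one_le_pow₀ one_le_two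
  calc ENNReal.ofReal (2 ^ k / (3 * 4 ^ (k + 2)))
      = ENNReal.ofReal ((4 * 2 ^ m)⁻¹) ^ (k + 2) * ENNReal.ofReal (2 ^ m / 3) *
          volume (dyadicBlock k m) := by
        rw [volume_dyadicBlock, ← ENNReal.ofReal_pow (by positivity),
          ← ENNReal.ofReal_mul (by positivity), ← ENNReal.ofReal_mul (by positivity)]
        congr 1
        rw [div_eq_iff (by positivity), inv_pow]
        field_simp
        ring
    _ = ∫⁻ _ in dyadicBlock k m,
          ENNReal.ofReal ((4 * 2 ^ m)⁻¹) ^ (k + 2) * ENNReal.ofReal (2 ^ m / 3) :=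
        (setLIntegral_const _ _).symm
    _ ≤ _ := by
        refine setLIntegral_mono' (measurableSet_dyadicBlock m) fun x ⟨⟨hx₁, hx₂⟩, hx⟩ => ?_
        refine le_trans ?_
          (lintegral_densityAdjoint_testBump_pow_ge (hm.trans hx₁) (hx.trans hx₁) _)
        have : 0 < x 0 := by linarith
        have : 2 * x 0 ≤ 4 * 2 ^ m := by rw [pow_succ] at hx₂; linarith
        gcongr

theorem lintegral_lintegral_densityAdjoint_testBump_pow_eq_top :
    ∫⁻ x : Fin (k + 1) → ℝ, ∫⁻ v, ENNReal.ofReal |densityAdjoint φ₀ x v| ^ (k + 2) = ∞ := by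
  refine top_le_iff.1 ?_
  calc ∞ = ∑' _ : ℕ, ENNReal.ofReal (2 ^ k / (3 * 4 ^ (k + 2))) :=
        (ENNReal.tsum_const_eq_top_of_ne_zero (ENNReal.ofReal_pos.2 (by positivity)).ne').symm
    _ ≤ ∑' m, ∫⁻ x in dyadicBlock k m,
          ∫⁻ v, ENNReal.ofReal |densityAdjoint φ₀ x v| ^ (k + 2) :=
        ENNReal.tsum_le_tsum ofReal_le_setLIntegral_dyadicBlock
    _ = ∫⁻ x in ⋃ m, dyadicBlock k m,
          ∫⁻ v, ENNReal.ofReal |densityAdjoint φ₀ x v| ^ (k + 2) :=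
        (lintegral_iUnion measurableSet_dyadicBlock pairwise_disjoint_dyadicBlock _).symm
    _ ≤ _ := setLIntegral_le_lintegral _ _

end Coordinates

/-- there is no finite constant `C` such that the dual endpoint estimate
`‖ρ*g‖_{L^{d+1}(ℝ^d×ℝ^d)} ≤ C ‖g‖_{L^{d+1}_t L^{(d+1)/2}_x}` holds for all Schwartz
functions `g` on `ℝ × ℝ^d`, where `ρ*g(x,v) = ∫_ℝ g(t, x + tv) dt`. -/
theorem dual_endpoint_estimate_fails (d : ℕ) (hd : 1 ≤ d) :
    ¬ ∃ C : ℝ, ∀ g : SchwartzMap (ℝ × (Fin d → ℝ)) ℝ,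
        (∫⁻ x : Fin d → ℝ, ∫⁻ v : Fin d → ℝ,
            ENNReal.ofReal |∫ t : ℝ, g (t, x + t • v)| ^ ((d : ℝ) + 1)) ^ (1 / ((d : ℝ) + 1))
          ≤ ENNReal.ofReal C *
              (∫⁻ t : ℝ, (∫⁻ x : Fin d → ℝ,
                  ENNReal.ofReal |g (t, x)| ^ (((d : ℝ) + 1) / 2)) ^ (2 : ℝ)) ^ (1 / ((d : ℝ) + 1)) := by
  rintro ⟨C, hC⟩
  obtain ⟨k, rfl⟩ : ∃ k, d = k + 1 := ⟨d - 1, by omega⟩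
  have hexp : ((k + 1 : ℕ) : ℝ) + 1 = (k + 2 : ℕ) := by push_cast; ring
  have hlhs : ∫⁻ x : Fin (k + 1) → ℝ, ∫⁻ v : Fin (k + 1) → ℝ,
      ENNReal.ofReal |∫ t : ℝ, testSchwartz _ (t, x + t • v)| ^ (((k + 1 : ℕ) : ℝ) + 1) = ∞ := by
    simp only [hexp, rpow_natCast, testSchwartz_apply]
    exact lintegral_lintegral_densityAdjoint_testBump_pow_eq_top
  have hrhs :=
    lintegral_rpow_lintegral_rpow_testSchwartz_ne_top (volume : Measure (Fin (k + 1) → ℝ))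
    (p := (((k + 1 : ℕ) : ℝ) + 1) / 2) (by positivity) two_pos
  have hp : (0 : ℝ) < 1 / (((k + 1 : ℕ) : ℝ) + 1) := by positivity
  have hest := hC (testSchwartz _)
  rw [hlhs, top_rpow_of_pos hp, top_le_iff] at hest
  exact mul_ne_top ofReal_ne_top (rpow_ne_top_of_nonneg hp.le hrhs) hest
end

section
/- Let g ∈ 𝒮(ℝ × ℝ^d) be nonzero and nonnegative with nonnegative compactly supported smooth space-time Fourier transform ĝ. Then ‖ρ*g‖_{L^{d+1}(ℝ^d × ℝ^d)} = ∞, where ρ*g(x,v) = ∫_ℝ g(t, x + tv) dt. -/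
open MeasureTheory ENNReal

/-- The space-time Fourier transform
`ĝ(τ,ξ) = ∫_{ℝ×ℝ^d} g(t,x) e^{−i(tτ + x·ξ)} dt dx`. -/
noncomputable def spaceTimeFourier {d : ℕ} (g : ℝ × (Fin d → ℝ) → ℝ)
    (p : ℝ × (Fin d → ℝ)) : ℂ :=
  ∫ z : ℝ × (Fin d → ℝ),
    (g z : ℂ) * Complex.exp (-Complex.I * (z.1 * p.1 + ∑ i, z.2 i * p.2 i))

set_option maxHeartbeats 2000000 in
/-- if `g ∈ 𝒮(ℝ × ℝ^d)` is nonzero and nonnegative with nonnegative,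
smooth, compactly supported space-time Fourier transform `ĝ`, then
`‖ρ*g‖_{L^{d+1}(ℝ^d×ℝ^d)} = ∞`, where `ρ*g(x,v) = ∫_ℝ g(t, x + tv) dt`. -/
theorem rhoStar_norm_infinite (d : ℕ) (hd : 1 ≤ d)
    (g : SchwartzMap (ℝ × (Fin d → ℝ)) ℝ) (hg_ne : g ≠ 0)
    (hg_nonneg : ∀ z, 0 ≤ g z)
    (hhat_real : ∀ p, (spaceTimeFourier (⇑g) p).im = 0)
    (hhat_nonneg : ∀ p, 0 ≤ (spaceTimeFourier (⇑g) p).re)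
    (hhat_supp : HasCompactSupport (spaceTimeFourier (⇑g)))
    (hhat_smooth : ContDiff ℝ (⊤ : ℕ∞) (spaceTimeFourier (⇑g))) :
    (∫⁻ x : Fin d → ℝ, ∫⁻ v : Fin d → ℝ,
        (∫⁻ t : ℝ, ENNReal.ofReal (g (t, x + t • v))) ^ ((d : ℝ) + 1)) = ∞ := by
  classical
  haveI : Nonempty (Fin d) := Fin.pos_iff_nonempty.1 hd
  -- a point of positivity
  obtain ⟨z₀, hz₀⟩ : ∃ z, g z ≠ 0 := by
    by_contra h
    push_neg at h
    exact hg_ne (DFunLike.ext _ _ fun z => by simp [h z])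
  have hz₀pos : 0 < g z₀ := lt_of_le_of_ne (hg_nonneg z₀) (Ne.symm hz₀)
  -- continuity at z₀
  obtain ⟨δ, hδpos, hδ⟩ : ∃ δ > 0, ∀ z, dist z z₀ ≤ δ → g z₀ / 2 ≤ g z := by
    obtain ⟨δ, hδpos, hδ⟩ :=
      Metric.continuousAt_iff.1 (g.continuous.continuousAt (x := z₀)) (g z₀ / 2) (by linarith)
    refine ⟨δ / 2, by linarith, fun z hz => ?_⟩
    have h1 : dist (g z) (g z₀) < g z₀ / 2 := hδ (lt_of_le_of_lt hz (by linarith))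
    rw [Real.dist_eq] at h1
    have := (abs_lt.1 h1).1
    linarith
  set r : ℝ := min δ 1 with hr_def
  have hrpos : 0 < r := lt_min hδpos one_pos
  have hr1 : r ≤ 1 := min_le_right _ _
  have hrδ : r ≤ δ := min_le_left _ _
  set T : ℝ := |z₀.1| + 1 with hT_def
  set R : ℝ := ‖z₀.2‖ + 1 with hR_def
  have hTpos : 0 < T := by positivity
  have hRpos : 0 < R := by positivity
  set B : Set (Fin d → ℝ) := Metric.closedBall 0 R with hB_def
  set c₀ : ℝ≥0∞ := ∫⁻ t in Set.Icc (-T) T, ∫⁻ y in B, ENNReal.ofReal (g (t, y)) with hc₀_def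
  set p : ℝ := (d : ℝ) + 1 with hp_def
  have hd1 : (1:ℝ) ≤ (d:ℝ) := by exact_mod_cast hd
  have hp1 : 1 < p := by simp only [hp_def]; linarith
  have hp0 : 0 < p := by linarith
  set ρ : (Fin d → ℝ) → (Fin d → ℝ) → ℝ≥0∞ :=
    fun x v => ∫⁻ t, ENNReal.ofReal (g (t, x + t • v)) with hρ_def
  -- measurability of ρ
  have hgm : Measurable (Function.uncurry
      (fun (q : (Fin d → ℝ) × (Fin d → ℝ)) (t : ℝ) =>
        ENNReal.ofReal (g (t, q.1 + t • q.2)))) := by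
    apply ENNReal.measurable_ofReal.comp
    apply Continuous.measurable
    exact g.continuous.comp (by fun_prop)
  have hρmeas : Measurable (Function.uncurry ρ) := hgm.lintegral_prod_right
  -- positivity of c₀
  have hc₀pos : 0 < c₀ := by
    have hIcc_sub : Set.Icc (z₀.1 - r) (z₀.1 + r) ⊆ Set.Icc (-T) T := by
      intro t ht
      obtain ⟨h1, h2⟩ := ht
      constructor <;>
        · simp only [hT_def]
          cases' abs_cases z₀.1 with h h <;> linarith
    have hball_sub : Metric.closedBall z₀.2 r ⊆ B := by
      intro y hy
      simp only [hB_def, Metric.mem_closedBall] at hy ⊢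
      calc dist y 0 ≤ dist y z₀.2 + dist z₀.2 0 := dist_triangle _ _ _
        _ ≤ r + ‖z₀.2‖ := by rw [dist_zero_right] at *; linarith
        _ ≤ R := by rw [hR_def]; linarith
    have hlow : ∀ t ∈ Set.Icc (z₀.1 - r) (z₀.1 + r), ∀ y ∈ Metric.closedBall z₀.2 r,
        ENNReal.ofReal (g z₀ / 2) ≤ ENNReal.ofReal (g (t, y)) := by
      intro t ht y hy
      apply ENNReal.ofReal_le_ofReal
      apply hδ
      have h1 : dist t z₀.1 ≤ r := by
        rw [Real.dist_eq]; rw [Set.mem_Icc] at ht; rw [abs_le]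
        constructor <;> linarith [ht.1, ht.2]
      have h2 : dist y z₀.2 ≤ r := Metric.mem_closedBall.1 hy
      calc dist ((t, y) : ℝ × (Fin d → ℝ)) z₀ = max (dist t z₀.1) (dist y z₀.2) := by
            rw [Prod.dist_eq]
        _ ≤ r := max_le h1 h2
        _ ≤ δ := hrδ
    have hinner_meas : Measurable fun t => ∫⁻ y in Metric.closedBall z₀.2 r,
        ENNReal.ofReal (g (t, y)) := by
      apply Measurable.lintegral_prod_right (f := fun t y => ENNReal.ofReal (g (t, y)))
      exact ENNReal.measurable_ofReal.comp (g.continuous.measurable)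
    calc (0 : ℝ≥0∞)
        < ENNReal.ofReal (g z₀ / 2) * volume (Metric.closedBall z₀.2 r)
            * ENNReal.ofReal (2 * r) := by
          apply ENNReal.mul_pos
          · apply mul_ne_zero
            · simp only [ne_eq, ENNReal.ofReal_eq_zero, not_le]
              linarith
            · exact (Metric.measure_closedBall_pos volume _ hrpos).ne'
          · exact (ENNReal.ofReal_pos.2 (by linarith)).ne'
      _ = ∫⁻ t in Set.Icc (z₀.1 - r) (z₀.1 + r),
            (ENNReal.ofReal (g z₀ / 2) * volume (Metric.closedBall z₀.2 r)) := by
          rw [setLIntegral_const, Real.volume_Icc]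
          congr 1
          ring_nf
      _ ≤ ∫⁻ t in Set.Icc (z₀.1 - r) (z₀.1 + r), ∫⁻ y in Metric.closedBall z₀.2 r,
            ENNReal.ofReal (g (t, y)) := by
          apply setLIntegral_mono hinner_meas
          intro t ht
          calc ENNReal.ofReal (g z₀ / 2) * volume (Metric.closedBall z₀.2 r)
              = ∫⁻ _ in Metric.closedBall z₀.2 r, ENNReal.ofReal (g z₀ / 2) := by
                rw [setLIntegral_const]
            _ ≤ _ := setLIntegral_mono (ENNReal.measurable_ofReal.comp (by fun_prop))
                  (fun y hy => hlow t ht y hy)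
      _ ≤ ∫⁻ t in Set.Icc (z₀.1 - r) (z₀.1 + r), ∫⁻ y in B, ENNReal.ofReal (g (t, y)) :=
          lintegral_mono fun t => lintegral_mono_set hball_sub
      _ ≤ c₀ := lintegral_mono_set hIcc_sub
  -- the top constant
  set A : ℝ≥0∞ := ENNReal.ofReal (2 * T + 2)
    * volume (Metric.closedBall (0 : Fin d → ℝ) (R + 1)) with hA_def
  have hA0 : A ≠ 0 := mul_ne_zero (ENNReal.ofReal_pos.2 (by linarith)).ne'
    (Metric.measure_closedBall_pos volume _ (by linarith)).ne'
  have hAt : A ≠ ∞ := ENNReal.mul_ne_top ENNReal.ofReal_ne_top measure_closedBall_lt_top.ne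
  -- the key pointwise (in v) lower bound
  have key : ∀ v : Fin d → ℝ,
      c₀ ^ p / (A * ENNReal.ofReal (‖v‖ + 1)) ^ d ≤ ∫⁻ x, ρ x v ^ p := by
    intro v
    have hv0 : (0:ℝ) ≤ ‖v‖ := norm_nonneg v
    have hv1 : (0:ℝ) < ‖v‖ + 1 := by linarith
    set E : Set (Fin d → ℝ) := (fun q : ℝ × (Fin d → ℝ) => q.2 - q.1 • v) ''
      (Set.Icc (-T) T ×ˢ Metric.closedBall 0 R) with hE_def
    have hEcomp : IsCompact E := ((isCompact_Icc.prod (isCompact_closedBall _ _)).image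
      (by fun_prop))
    have hEmeas : MeasurableSet E := hEcomp.isClosed.measurableSet
    set ind : (Fin d → ℝ) → ℝ≥0∞ := E.indicator (fun _ => (1:ℝ≥0∞)) with hind_def
    have hind_meas : Measurable ind := (measurable_const.indicator hEmeas)
    have hind_le : ∀ x, ind x ≤ 1 := fun x => by
      by_cases hx : x ∈ E <;> simp [hind_def, hx]
    have hρvmeas : Measurable fun x => ρ x v :=
      hρmeas.comp (measurable_id.prodMk measurable_const)
    -- Step 1: the tube integral is at least c₀
    have hlow : c₀ ≤ ∫⁻ x, ind x * ρ x v := by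
      have hmem : ∀ t ∈ Set.Icc (-T) T, ∀ y ∈ Metric.closedBall (0 : Fin d → ℝ) R,
          y - t • v ∈ E := by
        intro t ht y hy
        rw [hE_def]
        exact ⟨(t, y), ⟨ht, hy⟩, rfl⟩
      have hFmeas : Measurable (Function.uncurry fun (t : ℝ) (y : Fin d → ℝ) =>
          ind (y - t • v) * ENNReal.ofReal (g (t, y))) := by
        apply Measurable.mul
        · exact hind_meas.comp (by fun_prop)
        · exact ENNReal.measurable_ofReal.comp (g.continuous.measurable.comp (by fun_prop))
      have hinner_meas : Measurable fun t => ∫⁻ y, ind (y - t • v) * ENNReal.ofReal (g (t, y)) :=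
        hFmeas.lintegral_prod_right
      calc c₀ ≤ ∫⁻ t in Set.Icc (-T) T, ∫⁻ y, ind (y - t • v) * ENNReal.ofReal (g (t, y)) := by
            rw [hc₀_def]
            apply setLIntegral_mono hinner_meas
            intro t ht
            calc (∫⁻ y in B, ENNReal.ofReal (g (t, y)))
                = ∫⁻ y in B, ind (y - t • v) * ENNReal.ofReal (g (t, y)) := by
                  apply setLIntegral_congr_fun (by rw [hB_def]; exact measurableSet_closedBall)
                  intro y hy
                  beta_reduce
                  rw [hind_def, Set.indicator_of_mem (hmem t ht y hy), one_mul]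
              _ ≤ _ := setLIntegral_le_lintegral _ _
        _ ≤ ∫⁻ t, ∫⁻ y, ind (y - t • v) * ENNReal.ofReal (g (t, y)) :=
            setLIntegral_le_lintegral _ _
        _ = ∫⁻ t, ∫⁻ x, ind x * ENNReal.ofReal (g (t, x + t • v)) := by
            apply lintegral_congr
            intro t
            rw [← lintegral_add_right_eq_self
                (fun y => ind (y - t • v) * ENNReal.ofReal (g (t, y))) (t • v)]
            apply lintegral_congr
            intro x
            simp
        _ = ∫⁻ x, ∫⁻ t, ind x * ENNReal.ofReal (g (t, x + t • v)) := by
            apply lintegral_lintegral_swap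
            apply Measurable.aemeasurable
            apply Measurable.mul
            · exact hind_meas.comp (by fun_prop)
            · exact ENNReal.measurable_ofReal.comp (g.continuous.measurable.comp (by fun_prop))
        _ = ∫⁻ x, ind x * ρ x v := by
            apply lintegral_congr
            intro x
            rw [lintegral_const_mul' _ _ (ne_top_of_le_ne_top one_ne_top (hind_le x))]
    -- Step 2: the volume of the tube
    have hvol : volume E ≤ A * ENNReal.ofReal (‖v‖ + 1) := by
      set n : ℕ := ⌈2 * T * (‖v‖ + 1)⌉₊ with hn_def
      set tk : ℕ → ℝ := fun k => -T + k * (‖v‖ + 1)⁻¹ with htk_def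
      have hcover : E ⊆ ⋃ k ∈ Finset.range (n + 1),
          Metric.closedBall (-(tk k) • v) (R + 1) := by
        rw [hE_def]
        rintro x ⟨⟨s, y⟩, ⟨hs, hy⟩, rfl⟩
        simp only [Set.mem_Icc] at hs
        simp only [Metric.mem_closedBall] at hy
        set k : ℕ := ⌊(s + T) * (‖v‖ + 1)⌋₊ with hk_def
        have hsT : 0 ≤ s + T := by linarith [hs.1]
        have hk_le : (k : ℝ) ≤ (s + T) * (‖v‖ + 1) := Nat.floor_le (by positivity)
        have hk_lt : (s + T) * (‖v‖ + 1) < (k : ℝ) + 1 := Nat.lt_floor_add_one _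
        have hkn : k ∈ Finset.range (n + 1) := by
          rw [Finset.mem_range, Nat.lt_succ_iff]
          have h1 : (k:ℝ) ≤ 2 * T * (‖v‖ + 1) := by
            calc (k:ℝ) ≤ (s + T) * (‖v‖ + 1) := hk_le
              _ ≤ 2 * T * (‖v‖ + 1) := by nlinarith [hs.2]
          exact_mod_cast h1.trans (Nat.le_ceil _)
        have e1 : (k:ℝ)/(‖v‖+1) ≤ s + T := (div_le_iff₀ hv1).2 (by linarith [hk_le])
        have e2 : s + T < ((k:ℝ)+1)/(‖v‖+1) := (lt_div_iff₀ hv1).2 (by linarith [hk_lt])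
        have hsplit : ((k:ℝ)+1)/(‖v‖+1) = (k:ℝ)*(‖v‖+1)⁻¹ + (‖v‖+1)⁻¹ := by
          rw [add_div]; simp [div_eq_mul_inv]
        have hdivinv : (k:ℝ)/(‖v‖+1) = (k:ℝ)*(‖v‖+1)⁻¹ := div_eq_mul_inv _ _
        have htk_le : tk k ≤ s := by
          simp only [htk_def]; rw [hdivinv] at e1; linarith
        have htk_gt : s - tk k ≤ (‖v‖ + 1)⁻¹ := by
          simp only [htk_def]; linarith
        have habs : |tk k - s| ≤ (‖v‖ + 1)⁻¹ := by
          rw [abs_le]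
          constructor
          · linarith
          · linarith [htk_le, inv_nonneg.2 hv1.le]
        apply Set.mem_biUnion hkn
        rw [Metric.mem_closedBall]
        have hdist : dist (y - s • v) (-(tk k) • v) = ‖y + (tk k - s) • v‖ := by
          rw [dist_eq_norm]
          congr 1
          module
        rw [hdist]
        calc ‖y + (tk k - s) • v‖ ≤ ‖y‖ + ‖(tk k - s) • v‖ := norm_add_le _ _
          _ ≤ R + |tk k - s| * ‖v‖ := by
              rw [norm_smul, Real.norm_eq_abs]
              rw [dist_zero_right] at hy
              linarith
          _ ≤ R + (‖v‖ + 1)⁻¹ * ‖v‖ := by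
              have := mul_le_mul_of_nonneg_right habs hv0
              linarith
          _ ≤ R + 1 := by
              have : (‖v‖ + 1)⁻¹ * ‖v‖ ≤ 1 := by
                rw [inv_mul_le_iff₀ hv1]; linarith
              linarith
      calc volume E
          ≤ ∑ k ∈ Finset.range (n + 1), volume (Metric.closedBall (-(tk k) • v) (R + 1)) :=
            (measure_mono hcover).trans (measure_biUnion_finset_le _ _)
        _ = (n + 1 : ℕ) * volume (Metric.closedBall (0 : Fin d → ℝ) (R + 1)) := by
            rw [Finset.sum_congr rfl
                (fun k _ => Measure.addHaar_closedBall_center volume (-(tk k) • v) (R+1)),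
              Finset.sum_const, Finset.card_range, nsmul_eq_mul]
        _ ≤ _ := by
            have hcast : ((n + 1 : ℕ) : ℝ≥0∞) ≤ ENNReal.ofReal ((2 * T + 2) * (‖v‖ + 1)) := by
              rw [← ENNReal.ofReal_natCast]
              apply ENNReal.ofReal_le_ofReal
              push_cast
              have h1 : (n:ℝ) < 2 * T * (‖v‖ + 1) + 1 := Nat.ceil_lt_add_one (by positivity)
              nlinarith
            calc ((n + 1 : ℕ) : ℝ≥0∞) * volume (Metric.closedBall (0 : Fin d → ℝ) (R + 1))
                ≤ ENNReal.ofReal ((2 * T + 2) * (‖v‖ + 1))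
                  * volume (Metric.closedBall (0 : Fin d → ℝ) (R + 1)) :=
                  mul_le_mul_left hcast _
              _ = _ := by rw [ENNReal.ofReal_mul (by positivity), hA_def]; ring
    -- Step 3: Hölder
    set q : ℝ := Real.conjExponent p with hq_def
    have hpq : p.HolderConjugate q := Real.HolderConjugate.conjExponent hp1
    set f : (Fin d → ℝ) → ℝ≥0∞ := fun x => ind x * ρ x v with hf_def
    have hf_meas : AEMeasurable f volume := (hind_meas.mul hρvmeas).aemeasurable
    have hmul : ∀ x, (f * ind) x = ind x * ρ x v := by
      intro x
      by_cases hx : x ∈ E <;> simp [hf_def, hind_def, hx]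
    have holder := ENNReal.lintegral_mul_le_Lp_mul_Lq volume hpq hf_meas hind_meas.aemeasurable
    rw [lintegral_congr hmul] at holder
    have hfp : ∀ x, f x ^ p ≤ ρ x v ^ p := by
      intro x
      apply ENNReal.rpow_le_rpow _ hp0.le
      by_cases hx : x ∈ E <;> simp [hf_def, hind_def, hx]
    have hindq : (∫⁻ x, ind x ^ q) = volume E := by
      rw [← lintegral_indicator_one hEmeas]
      apply lintegral_congr
      intro x
      by_cases hx : x ∈ E <;>
        simp [hind_def, hx, ENNReal.zero_rpow_of_pos hpq.symm.pos]
    set W' : ℝ≥0∞ := A * ENNReal.ofReal (‖v‖ + 1) with hW'_def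
    have keyH : c₀ ≤ (∫⁻ x, ρ x v ^ p) ^ (1/p) * W' ^ (1/q) := by
      calc c₀ ≤ (∫⁻ x, f x ^ p) ^ (1/p) * (∫⁻ x, ind x ^ q) ^ (1/q) := hlow.trans holder
        _ ≤ (∫⁻ x, ρ x v ^ p) ^ (1/p) * W' ^ (1/q) := by
            apply mul_le_mul'
            · exact ENNReal.rpow_le_rpow (lintegral_mono hfp) (by positivity)
            · rw [hindq]
              exact ENNReal.rpow_le_rpow hvol (one_div_nonneg.2 hpq.symm.nonneg)
    have hqp : (1/q) * p = (d:ℝ) := by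
      have h1 : p⁻¹ + q⁻¹ = 1 := hpq.inv_add_inv_eq_one
      have hpne : p ≠ 0 := hp0.ne'
      have : (1/q) = 1 - 1/p := by rw [one_div, one_div]; linarith
      rw [this]
      field_simp
      simp [hp_def]
    have key2 : c₀ ^ p ≤ (∫⁻ x, ρ x v ^ p) * W' ^ d := by
      calc c₀ ^ p ≤ ((∫⁻ x, ρ x v ^ p) ^ (1/p) * W' ^ (1/q)) ^ p :=
            ENNReal.rpow_le_rpow keyH hp0.le
        _ = ((∫⁻ x, ρ x v ^ p) ^ (1/p)) ^ p * (W' ^ (1/q)) ^ p :=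
            ENNReal.mul_rpow_of_nonneg _ _ hp0.le
        _ = (∫⁻ x, ρ x v ^ p) * W' ^ d := by
            rw [← ENNReal.rpow_mul, ← ENNReal.rpow_mul, one_div, inv_mul_cancel₀ hp0.ne',
              ENNReal.rpow_one, hqp, ENNReal.rpow_natCast]
    calc c₀ ^ p / W' ^ d ≤ ((∫⁻ x, ρ x v ^ p) * W' ^ d) / W' ^ d :=
          ENNReal.div_le_div_right key2 _
      _ ≤ ∫⁻ x, ρ x v ^ p := ENNReal.div_le_of_le_mul le_rfl
  -- Step 4: the v-integral of the lower bound diverges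
  have hfinal : (∫⁻ v : Fin d → ℝ, c₀ ^ p / (A * ENNReal.ofReal (‖v‖ + 1)) ^ d) = ∞ := by
    set K : ℝ≥0∞ := c₀ ^ p * (A ^ d)⁻¹ with hK_def
    have hK0 : K ≠ 0 := by
      apply mul_ne_zero
      · intro h
        rw [ENNReal.rpow_eq_zero_iff] at h
        rcases h with ⟨h, -⟩ | ⟨-, h⟩
        · exact hc₀pos.ne' h
        · simp only [hp_def] at h; linarith
      · exact ENNReal.inv_ne_zero.2 (ENNReal.pow_ne_top hAt)
    set φ : (Fin d → ℝ) → ℝ≥0∞ := fun v => ((ENNReal.ofReal (‖v‖ + 1)) ^ d)⁻¹ with hφ_def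
    have hφ_meas : Measurable φ := by
      apply Measurable.inv
      exact ((measurable_norm.add_const (1:ℝ)).ennreal_ofReal).pow_const d
    have hrw : ∀ v : Fin d → ℝ,
        c₀ ^ p / (A * ENNReal.ofReal (‖v‖ + 1)) ^ d = K * φ v := by
      intro v
      rw [div_eq_mul_inv, mul_pow,
        ENNReal.mul_inv (Or.inl (pow_ne_zero _ hA0)) (Or.inl (ENNReal.pow_ne_top hAt)),
        ← mul_assoc]
    rw [lintegral_congr hrw, lintegral_const_mul _ hφ_meas]
    set κ : ℝ≥0∞ := volume (Metric.closedBall (0 : Fin d → ℝ) 1) with hκ_def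
    have hκ0 : κ ≠ 0 := (Metric.measure_closedBall_pos volume _ one_pos).ne'
    set cn : ℕ → (Fin d → ℝ) := fun n _ => 3 * 2 ^ n / 2 with hcn_def
    set Bn : ℕ → Set (Fin d → ℝ) := fun n => Metric.closedBall (cn n) (2 ^ n / 4) with hBn_def
    have hcn_norm : ∀ n, ‖cn n‖ = 3 * 2 ^ n / 2 := by
      intro n
      have h : ‖cn n‖ = ‖(3 * 2 ^ n / 2 : ℝ)‖ := pi_norm_const _
      rw [h, Real.norm_eq_abs, abs_of_pos (by positivity)]
    have hsub : ∀ n, ∀ u ∈ Bn n, 2 ^ n < ‖u‖ ∧ ‖u‖ ≤ 2 ^ (n + 1) := by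
      intro n u hu
      rw [hBn_def, Metric.mem_closedBall, dist_eq_norm] at hu
      have h1 : ‖cn n‖ - ‖u‖ ≤ ‖u - cn n‖ := by
        have := norm_sub_norm_le (cn n) u
        rwa [norm_sub_rev] at this
      have h2 : ‖u‖ - ‖cn n‖ ≤ ‖u - cn n‖ := norm_sub_norm_le u (cn n)
      rw [hcn_norm n] at h1 h2
      have h2n : (0:ℝ) < 2 ^ n := by positivity
      constructor
      · nlinarith
      · rw [pow_succ]; nlinarith
    have hdisj : Pairwise (Function.onFun Disjoint Bn) := by
      have key2 : ∀ m n, m < n → Disjoint (Bn m) (Bn n) := by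
        intro m n hmn
        rw [Set.disjoint_left]
        intro u hm hn
        have h1 := (hsub m u hm).2
        have h2 := (hsub n u hn).1
        have h3 : (2:ℝ) ^ (m + 1) ≤ 2 ^ n := pow_le_pow_right₀ (by norm_num) (by omega)
        linarith
      intro m n hmn
      rcases lt_or_gt_of_ne hmn with h | h
      · exact key2 m n h
      · exact (key2 n m h).symm
    have hshell : ∀ n : ℕ, ENNReal.ofReal ((16:ℝ)⁻¹ ^ d) * κ ≤ ∫⁻ v in Bn n, φ v := by
      intro n
      have h2n : (0:ℝ) < 2 ^ n := by positivity
      have hlow2 : ∀ v ∈ Bn n, ((ENNReal.ofReal ((2:ℝ) ^ (n + 2))) ^ d)⁻¹ ≤ φ v := by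
        intro v hv
        rw [hφ_def]
        have hb := (hsub n v hv).2
        have : ENNReal.ofReal (‖v‖ + 1) ≤ ENNReal.ofReal ((2:ℝ) ^ (n + 2)) := by
          apply ENNReal.ofReal_le_ofReal
          have h1 : (1:ℝ) ≤ 2 ^ (n + 1) := one_le_pow₀ (by norm_num)
          have h2 : (2:ℝ) ^ (n + 2) = 2 ^ (n + 1) * 2 := pow_succ 2 (n + 1)
          linarith
        exact ENNReal.inv_le_inv' (pow_le_pow_left' this d)
      have hvol2 : volume (Bn n) = ENNReal.ofReal (((2:ℝ) ^ n / 4) ^ d) * κ := by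
        rw [hBn_def, hκ_def]
        have := Measure.addHaar_closedBall' (volume : Measure (Fin d → ℝ)) (cn n)
          (r := 2 ^ n / 4) (by positivity)
        rwa [Module.finrank_fin_fun] at this
      calc ENNReal.ofReal ((16:ℝ)⁻¹ ^ d) * κ
          = ((ENNReal.ofReal ((2:ℝ) ^ (n + 2))) ^ d)⁻¹ * volume (Bn n) := by
            rw [hvol2, ← ENNReal.ofReal_pow (by positivity), ← ENNReal.ofReal_inv_of_pos
              (by positivity), ← mul_assoc, ← ENNReal.ofReal_mul (by positivity)]
            congr 2
            rw [← inv_pow, ← mul_pow]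
            congr 1
            rw [pow_add]
            field_simp
            ring
        _ = ∫⁻ _ in Bn n, ((ENNReal.ofReal ((2:ℝ) ^ (n + 2))) ^ d)⁻¹ :=
            (setLIntegral_const _ _).symm
        _ ≤ _ := setLIntegral_mono hφ_meas hlow2
    have hS : (∫⁻ v : Fin d → ℝ, φ v) = ∞ := by
      rw [eq_top_iff]
      calc (∞ : ℝ≥0∞) = ∑' _ : ℕ, ENNReal.ofReal ((16:ℝ)⁻¹ ^ d) * κ := by
            rw [ENNReal.tsum_const_eq_top_of_ne_zero]
            exact mul_ne_zero (ENNReal.ofReal_pos.2 (by positivity)).ne' hκ0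
        _ ≤ ∑' n : ℕ, ∫⁻ v in Bn n, φ v := ENNReal.tsum_le_tsum hshell
        _ = ∫⁻ v in ⋃ n, Bn n, φ v :=
            (lintegral_iUnion (fun n => measurableSet_closedBall) hdisj φ).symm
        _ ≤ _ := setLIntegral_le_lintegral _ _
    rw [hS, ENNReal.mul_top hK0]
  -- assemble
  rw [eq_top_iff]
  calc (⊤ : ℝ≥0∞) = ∫⁻ v : Fin d → ℝ, c₀ ^ p / (A * ENNReal.ofReal (‖v‖ + 1)) ^ d :=
        hfinal.symm
    _ ≤ ∫⁻ v : Fin d → ℝ, ∫⁻ x : Fin d → ℝ, ρ x v ^ p := lintegral_mono key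
    _ = ∫⁻ x : Fin d → ℝ, ∫⁻ v : Fin d → ℝ, ρ x v ^ p := by
        apply (lintegral_lintegral_swap _).symm
        exact (ENNReal.continuous_rpow_const.measurable.comp hρmeas).aemeasurable
end

section
/- The endpoint estimate ‖f‖_{L^2_t L^{2d/(d−1)}_x L^{2d/(d+1)}_v} ≤ C‖f^0‖_{L^2_{x,v}} for the kinetic transport equation is equivalent (with comparable constants) to the estimate ‖f‖_{L^{(d+1)/d}_t L^{(d+1)/(d−1)}_x L^1_v} ≤ C'‖f^0‖_{L^{(d+1)/d}_{x,v}}, where f(t,x,v) = f^0(x − tv, v). -/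
open MeasureTheory ENNReal

/-- The `L^p` "norm" of an `ℝ≥0∞`-valued function, allowing `p = ∞`. -/
noncomputable def eNorm {α : Type*} [MeasurableSpace α] (μ : Measure α) (p : ℝ≥0∞)
    (F : α → ℝ≥0∞) : ℝ≥0∞ :=
  if p = ∞ then essSup F μ else (∫⁻ a, F a ^ p.toReal ∂μ) ^ (1 / p.toReal)

/-- The mixed norm `‖f‖_{L^q_t L^p_x L^r_v}` of the kinetic transport solution
`f(t,x,v) = f⁰(x − tv, v)`, with exponents in `ℝ≥0∞`. -/
noncomputable def transportNorm {d : ℕ} (q p r : ℝ≥0∞)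
    (f0 : (Fin d → ℝ) × (Fin d → ℝ) → ℝ) : ℝ≥0∞ :=
  eNorm volume q (fun t : ℝ =>
    eNorm volume p (fun x : Fin d → ℝ =>
      eNorm volume r (fun v : Fin d → ℝ => ENNReal.ofReal |f0 (x - t • v, v)|)))

lemma eNorm_rpow {α : Type*} [MeasurableSpace α] (μ : Measure α) (p : ℝ≥0∞) {c : ℝ}
    (hc : 0 < c) (F : α → ℝ≥0∞) :
    eNorm μ p (fun a => F a ^ c) = eNorm μ (ENNReal.ofReal c * p) F ^ c := by
  have hc0 : ENNReal.ofReal c ≠ 0 := (ENNReal.ofReal_pos.mpr hc).ne'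
  by_cases hp : p = ∞
  · subst hp
    rw [eNorm, eNorm, if_pos rfl, if_pos (ENNReal.mul_top hc0)]
    have h := (ENNReal.orderIsoRpow c hc).essSup_apply F μ
    simp only [ENNReal.orderIsoRpow_apply] at h
    exact h.symm
  · have hcp : ENNReal.ofReal c * p ≠ ∞ := ENNReal.mul_ne_top ENNReal.ofReal_ne_top hp
    rw [eNorm, eNorm, if_neg hp, if_neg hcp]
    have ht : (ENNReal.ofReal c * p).toReal = c * p.toReal := by
      rw [ENNReal.toReal_mul, ENNReal.toReal_ofReal hc.le]
    rw [ht, ← ENNReal.rpow_mul]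
    have he : 1 / (c * p.toReal) * c = 1 / p.toReal := by
      rcases eq_or_ne p.toReal 0 with h | h
      · simp [h]
      · field_simp
    rw [he]
    congr 1
    exact lintegral_congr fun a => by rw [← ENNReal.rpow_mul]

lemma eLpNorm_eq_eNorm {α : Type*} [MeasurableSpace α] (μ : Measure α) {s : ℝ≥0∞}
    (hs0 : s ≠ 0) (hst : s ≠ ∞) (f : α → ℝ) :
    eLpNorm f s μ = eNorm μ s (fun a => ENNReal.ofReal |f a|) := by
  rw [eLpNorm_eq_lintegral_rpow_enorm_toReal hs0 hst, eNorm, if_neg hst]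
  congr 1
  exact lintegral_congr fun a => by rw [Real.enorm_eq_ofReal_abs]

lemma eLpNorm_abs_rpow {α : Type*} [MeasurableSpace α] (μ : Measure α) {s : ℝ≥0∞} {c : ℝ}
    (hc : 0 < c) (hs0 : s ≠ 0) (hst : s ≠ ∞) (hcs0 : ENNReal.ofReal c * s ≠ 0)
    (hcst : ENNReal.ofReal c * s ≠ ∞) (f : α → ℝ) :
    eLpNorm (fun a => |f a| ^ c) s μ = eLpNorm f (ENNReal.ofReal c * s) μ ^ c := by
  rw [eLpNorm_eq_eNorm μ hs0 hst, eLpNorm_eq_eNorm μ hcs0 hcst]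
  have : (fun a => ENNReal.ofReal |(|f a| ^ c)|) =
      fun a => (ENNReal.ofReal |f a|) ^ c := by
    funext a
    rw [abs_of_nonneg (Real.rpow_nonneg (abs_nonneg _) c),
      ← ENNReal.ofReal_rpow_of_nonneg (abs_nonneg _) hc.le]
  rw [this, eNorm_rpow μ s hc]

lemma transportNorm_abs_rpow {d : ℕ} (q p r : ℝ≥0∞) {c : ℝ} (hc : 0 < c)
    (f0 : (Fin d → ℝ) × (Fin d → ℝ) → ℝ) :
    transportNorm q p r (fun z => |f0 z| ^ c)
      = transportNorm (ENNReal.ofReal c * q) (ENNReal.ofReal c * p) (ENNReal.ofReal c * r) f0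
        ^ c := by
  rw [transportNorm, transportNorm, ← eNorm_rpow volume q hc]
  congr 1
  funext t
  rw [← eNorm_rpow volume p hc]
  congr 1
  funext x
  rw [← eNorm_rpow volume r hc]
  congr 1
  funext v
  rw [abs_of_nonneg (Real.rpow_nonneg (abs_nonneg _) c),
    ← ENNReal.ofReal_rpow_of_nonneg (abs_nonneg _) hc.le]

lemma transfer {d : ℕ} (q p r s : ℝ≥0∞) {c : ℝ} (hc : 0 < c)
    (hs0 : s ≠ 0) (hst : s ≠ ∞) (hcs0 : ENNReal.ofReal c * s ≠ 0)
    (hcst : ENNReal.ofReal c * s ≠ ∞) (C : ℝ) (hC : 0 ≤ C)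
    (h : ∀ f0 : (Fin d → ℝ) × (Fin d → ℝ) → ℝ, Measurable f0 →
      transportNorm q p r f0 ≤ ENNReal.ofReal C * eLpNorm f0 s volume) :
    ∀ f0 : (Fin d → ℝ) × (Fin d → ℝ) → ℝ, Measurable f0 →
      transportNorm (ENNReal.ofReal c * q) (ENNReal.ofReal c * p) (ENNReal.ofReal c * r) f0
        ≤ ENNReal.ofReal (C ^ (1 / c)) * eLpNorm f0 (ENNReal.ofReal c * s) volume := by
  intro f0 hf0
  have hg : Measurable fun z => |f0 z| ^ c :=
    (Real.continuous_rpow_const hc.le).measurable.comp hf0.abs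
  have key := h _ hg
  rw [transportNorm_abs_rpow q p r hc, eLpNorm_abs_rpow volume hc hs0 hst hcs0 hcst] at key
  have := ENNReal.rpow_le_rpow key (le_of_lt (by positivity : (0:ℝ) < 1 / c))
  rw [← ENNReal.rpow_mul, mul_one_div, div_self hc.ne', ENNReal.rpow_one,
    ENNReal.mul_rpow_of_nonneg _ _ (by positivity : (0:ℝ) ≤ 1 / c),
    ← ENNReal.rpow_mul, mul_one_div, div_self hc.ne', ENNReal.rpow_one,
    ENNReal.ofReal_rpow_of_nonneg hC (by positivity : (0:ℝ) ≤ 1 / c)] at this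
  exact this

/-- the endpoint estimate
`‖f‖_{L^2_t L^{2d/(d−1)}_x L^{2d/(d+1)}_v} ≤ C ‖f⁰‖_{L^2_{x,v}}` is equivalent to
`‖f‖_{L^{(d+1)/d}_t L^{(d+1)/(d−1)}_x L^1_v} ≤ C' ‖f⁰‖_{L^{(d+1)/d}_{x,v}}`. -/
theorem endpoint_estimates_equivalent (d : ℕ) (hd : 1 ≤ d) :
    (∃ C : ℝ, 0 ≤ C ∧ ∀ f0 : (Fin d → ℝ) × (Fin d → ℝ) → ℝ, Measurable f0 →
        transportNorm 2 (2 * d / ((d : ℝ≥0∞) - 1)) (2 * d / ((d : ℝ≥0∞) + 1)) f0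
          ≤ ENNReal.ofReal C * eLpNorm f0 2 volume)
    ↔ (∃ C' : ℝ, 0 ≤ C' ∧ ∀ f0 : (Fin d → ℝ) × (Fin d → ℝ) → ℝ, Measurable f0 →
        transportNorm (((d : ℝ≥0∞) + 1) / d) (((d : ℝ≥0∞) + 1) / ((d : ℝ≥0∞) - 1)) 1 f0
          ≤ ENNReal.ofReal C' * eLpNorm f0 (((d : ℝ≥0∞) + 1) / d) volume) := by
  have hD0 : (d : ℝ≥0∞) ≠ 0 := Nat.cast_ne_zero.mpr (by omega)
  have hDt : (d : ℝ≥0∞) ≠ ∞ := ENNReal.natCast_ne_top d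
  have h2D0 : 2 * (d : ℝ≥0∞) ≠ 0 := by simp [hD0]
  have h2Dt : 2 * (d : ℝ≥0∞) ≠ ∞ := by finiteness
  have hD10 : (d : ℝ≥0∞) + 1 ≠ 0 := by simp
  have hD1t : (d : ℝ≥0∞) + 1 ≠ ∞ := by finiteness
  have hoc1 : ENNReal.ofReal ((d + 1 : ℝ) / (2 * d)) = ((d : ℝ≥0∞) + 1) / (2 * d) := by
    rw [ENNReal.ofReal_div_of_pos (by positivity)]
    congr 1
    · rw [ENNReal.ofReal_add (by positivity) zero_le_one, ENNReal.ofReal_natCast,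
        ENNReal.ofReal_one]
    · rw [ENNReal.ofReal_mul (by norm_num), ENNReal.ofReal_natCast, ENNReal.ofReal_ofNat]
  have hoc2 : ENNReal.ofReal ((2 * d : ℝ) / (d + 1)) = (2 * (d : ℝ≥0∞)) / ((d : ℝ≥0∞) + 1) := by
    rw [ENNReal.ofReal_div_of_pos (by positivity)]
    congr 1
    · rw [ENNReal.ofReal_mul (by norm_num), ENNReal.ofReal_natCast, ENNReal.ofReal_ofNat]
    · rw [ENNReal.ofReal_add (by positivity) zero_le_one, ENNReal.ofReal_natCast,
        ENNReal.ofReal_one]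
  have k1 : (((d : ℝ≥0∞) + 1) / (2 * d)) * (2 * d) = (d : ℝ≥0∞) + 1 :=
    ENNReal.div_mul_cancel h2D0 h2Dt
  have k2 : (((d : ℝ≥0∞) + 1) / (2 * d)) * 2 = ((d : ℝ≥0∞) + 1) / d := by
    rw [ENNReal.eq_div_iff hD0 hDt]
    calc (d : ℝ≥0∞) * ((((d : ℝ≥0∞) + 1) / (2 * d)) * 2)
        = (((d : ℝ≥0∞) + 1) / (2 * d)) * (2 * d) := by ring
      _ = _ := k1
  have k3 : (((d : ℝ≥0∞) + 1) / (2 * d)) * (2 * d / ((d : ℝ≥0∞) - 1))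
      = ((d : ℝ≥0∞) + 1) / ((d : ℝ≥0∞) - 1) := by
    rw [← mul_div_assoc, k1]
  have k4 : (((d : ℝ≥0∞) + 1) / (2 * d)) * (2 * d / ((d : ℝ≥0∞) + 1)) = 1 := by
    rw [← mul_div_assoc, k1, ENNReal.div_self hD10 hD1t]
  have l1 : ((2 * (d : ℝ≥0∞)) / ((d : ℝ≥0∞) + 1)) * (((d : ℝ≥0∞) + 1) / d) = 2 := by
    rw [← mul_div_assoc, ENNReal.div_mul_cancel hD10 hD1t, mul_div_assoc,
      ENNReal.div_self hD0 hDt, mul_one]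
  have l2 : ((2 * (d : ℝ≥0∞)) / ((d : ℝ≥0∞) + 1)) * (((d : ℝ≥0∞) + 1) / ((d : ℝ≥0∞) - 1))
      = 2 * d / ((d : ℝ≥0∞) - 1) := by
    rw [← mul_div_assoc, ENNReal.div_mul_cancel hD10 hD1t]
  have hs20 : ((d : ℝ≥0∞) + 1) / d ≠ 0 := by
    simp [ENNReal.div_eq_zero_iff, hD10, hDt]
  have hs2t : ((d : ℝ≥0∞) + 1) / d ≠ ∞ := by
    simp [ENNReal.div_eq_top, hD0, hD1t]
  constructor
  · rintro ⟨C, hC, h⟩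
    refine ⟨C ^ (1 / ((d + 1 : ℝ) / (2 * d))), Real.rpow_nonneg hC _, ?_⟩
    have hc : (0:ℝ) < (d + 1 : ℝ) / (2 * d) := by positivity
    have := transfer 2 (2 * d / ((d : ℝ≥0∞) - 1)) (2 * d / ((d : ℝ≥0∞) + 1)) 2 hc
      (by norm_num) (by norm_num)
      (by rw [hoc1, k2]; exact hs20) (by rw [hoc1, k2]; exact hs2t) C hC h
    rw [hoc1, k2, k3, k4] at this
    exact this
  · rintro ⟨C, hC, h⟩
    refine ⟨C ^ (1 / ((2 * d : ℝ) / (d + 1))), Real.rpow_nonneg hC _, ?_⟩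
    have hc : (0:ℝ) < (2 * d : ℝ) / (d + 1) := by positivity
    have := transfer (((d : ℝ≥0∞) + 1) / d) (((d : ℝ≥0∞) + 1) / ((d : ℝ≥0∞) - 1)) 1
      (((d : ℝ≥0∞) + 1) / d) hc hs20 hs2t
      (by rw [hoc2, l1]; norm_num) (by rw [hoc2, l1]; norm_num) C hC h
    rw [hoc2, l1, l2, mul_one] at this
    exact this
end
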